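/- Let q be a prime power, n and d positive integers, and let V ⊆ F_q^n with |V| = |I^{(n)}| be such that the matrix [m_α(v)]_{v∈V, α∈I^{(n)}} is invertible over F_q. Let Q and Q' be polynomials in F_q[x₁,…,x_n] all of whose monomials have exponent vectors in I^{(n)} (i.e., total degree at most d, all local degrees at most min(d,q−1), and zero constant term). If for every v = (v₁,…,v_n) ∈ V the univariate polynomials Q(v₁x,…,v_nx) and Q'(v₁x,…,v_nx) in F_q[x] are equal, then Q = Q'. -/
import Mathlib
set_option maxHeartbeats 1000000


/-- The index set `I^{(n)}` of non-zero exponent vectors of monomials in `n` variables of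
total degree at most `d` and all local degrees at most `min d (q - 1)` (exponents are
represented as elements of `Fin (d + 1)`). -/
abbrev VandIdx (n d q : ℕ) : Type :=
  {α : Fin n → Fin (d + 1) //
    (∑ i, (α i : ℕ)) ≤ d ∧ (∀ i, (α i : ℕ) ≤ min d (q - 1)) ∧ α ≠ 0}

/-- Let `V ⊆ F_q^n` with `|V| = |I^{(n)}|` (given by an injective enumeration `v`) be such
that the generalized Vandermonde matrix `[m_α(v)]_{v ∈ V, α ∈ I^{(n)}}` is invertible over
`F_q`. Let `Q` and `Q'` be polynomials in `F_q[x₁,…,x_n]` all of whose monomials have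
exponent vectors in `I^{(n)}`. If for every `v = (v₁,…,v_n) ∈ V` the univariate polynomials
`Q(v₁x,…,v_nx)` and `Q'(v₁x,…,v_nx)` are equal, then `Q = Q'`. -/
theorem stmt_18 (F : Type*) [Field F] [Fintype F] [DecidableEq F]
    (n d : ℕ) (hn : 0 < n) (hd : 0 < d)
    (v : VandIdx n d (Fintype.card F) → (Fin n → F))
    (hv : Function.Injective v)
    (hM : IsUnit (Matrix.of fun r c : VandIdx n d (Fintype.card F) =>
      ∏ i, v r i ^ ((c : Fin n → Fin (d + 1)) i : ℕ)))
    (Q Q' : MvPolynomial (Fin n) F)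
    (hQ : ∀ α ∈ Q.support,
      (∑ i, α i) ≤ d ∧ (∀ i, α i ≤ min d (Fintype.card F - 1)) ∧ α ≠ 0)
    (hQ' : ∀ α ∈ Q'.support,
      (∑ i, α i) ≤ d ∧ (∀ i, α i ≤ min d (Fintype.card F - 1)) ∧ α ≠ 0)
    (heval : ∀ r : VandIdx n d (Fintype.card F),
      MvPolynomial.aeval (fun i => Polynomial.C (v r i) * Polynomial.X) Q =
        MvPolynomial.aeval (fun i => Polynomial.C (v r i) * Polynomial.X) Q') :
    Q = Q' := by
  set D := Q - Q' with hD
  set emb : VandIdx n d (Fintype.card F) → (Fin n →₀ ℕ) :=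
    fun idx => Finsupp.equivFunOnFinite.symm (fun i => (idx.1 i : ℕ)) with hemb
  have emb_apply : ∀ idx i, emb idx i = (idx.1 i : ℕ) := by
    intro idx i; simp [hemb]
  have emb_inj : Function.Injective emb := by
    intro a b hab
    apply Subtype.ext
    funext i
    exact Fin.ext (by simpa [emb_apply] using congrArg (fun f : Fin n →₀ ℕ => f i) hab)
  have hDeval : ∀ r, MvPolynomial.eval (v r) D = 0 := by
    intro r
    have h0 : (MvPolynomial.aeval (fun i => Polynomial.C (v r i) * Polynomial.X)) D = 0 := by
      rw [hD, map_sub, heval r, sub_self]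
    have hcomp := MvPolynomial.comp_aeval
      (f := fun i => Polynomial.C (v r i) * Polynomial.X) (Polynomial.aeval (1 : F))
    have h1 := congrArg (fun f : MvPolynomial (Fin n) F →ₐ[F] F => f D) hcomp
    simp only [AlgHom.comp_apply, h0, map_zero] at h1
    have h2 : (MvPolynomial.aeval (fun i =>
        (Polynomial.aeval (1:F)) (Polynomial.C (v r i) * Polynomial.X))) D = 0 := h1.symm
    simp only [map_mul, Polynomial.aeval_C, Polynomial.aeval_X, mul_one,
      Algebra.algebraMap_self_apply] at h2
    have h3 : MvPolynomial.eval (v r) D = MvPolynomial.aeval (v r) D := by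
      rw [← MvPolynomial.coe_aeval_eq_eval]; rfl
    rw [h3]; exact h2
  have hsupp : ∀ α ∈ D.support, ∃ idx, emb idx = α := by
    intro α hα
    have hne : MvPolynomial.coeff α D ≠ 0 := MvPolynomial.mem_support_iff.mp hα
    have hmem : α ∈ Q.support ∪ Q'.support := by
      by_contra h
      simp only [Finset.mem_union, MvPolynomial.mem_support_iff, not_or, not_not] at h
      exact hne (by simp [hD, MvPolynomial.coeff_sub, h.1, h.2])
    have hcond : (∑ i, α i) ≤ d ∧ (∀ i, α i ≤ min d (Fintype.card F - 1)) ∧ α ≠ 0 := by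
      rcases Finset.mem_union.mp hmem with h | h
      · exact hQ α h
      · exact hQ' α h
    refine ⟨⟨fun i => ⟨α i, ?_⟩, ?_, ?_, ?_⟩, ?_⟩
    · exact Nat.lt_succ_of_le (le_trans (hcond.2.1 i) (min_le_left _ _))
    · simpa using hcond.1
    · intro i; simpa using hcond.2.1 i
    · intro h
      apply hcond.2.2
      ext i
      simpa using congrArg (fun f => (f i : ℕ)) h
    · ext i; simp [emb_apply]
  set c : VandIdx n d (Fintype.card F) → F :=
    fun idx => MvPolynomial.coeff (emb idx) D with hc
  set M : Matrix (VandIdx n d (Fintype.card F)) (VandIdx n d (Fintype.card F)) F :=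
    Matrix.of fun r c : VandIdx n d (Fintype.card F) =>
      ∏ i, v r i ^ ((c : Fin n → Fin (d + 1)) i : ℕ) with hMdef
  have hmul : M.mulVec c = 0 := by
    funext r
    have step1 : M.mulVec c r = ∑ idx : VandIdx n d (Fintype.card F),
        MvPolynomial.coeff (emb idx) D * ∏ i, v r i ^ (emb idx i) := by
      simp only [Matrix.mulVec, dotProduct, hMdef, Matrix.of_apply, hc]
      refine Finset.sum_congr rfl fun idx _ => ?_
      rw [mul_comm]
      exact congrArg _ (Finset.prod_congr rfl fun i _ => by rw [emb_apply])
    rw [step1]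
    rw [show (∑ idx : VandIdx n d (Fintype.card F),
        MvPolynomial.coeff (emb idx) D * ∏ i, v r i ^ (emb idx i))
        = ∑ β ∈ Finset.univ.image emb,
          MvPolynomial.coeff β D * ∏ i, v r i ^ (β i) from
      (Finset.sum_image (f := fun β => MvPolynomial.coeff β D * ∏ i, v r i ^ (β i))
        (fun a _ b _ h => emb_inj h)).symm]
    have hsub : D.support ⊆ Finset.univ.image emb := by
      intro α hα
      obtain ⟨idx, hidx⟩ := hsupp α hα
      exact Finset.mem_image.mpr ⟨idx, Finset.mem_univ _, hidx⟩
    rw [← Finset.sum_subset hsub (fun β _ hβ => by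
      simp [MvPolynomial.notMem_support_iff.mp hβ])]
    have h3 := hDeval r
    rw [MvPolynomial.eval_eq'] at h3
    simpa using h3
  have hc0 : c = 0 := by
    obtain ⟨u, hu⟩ := hM
    have h4 : u.inv.mulVec (M.mulVec c) = c := by
      rw [Matrix.mulVec_mulVec]
      have h5 : (u.inv : Matrix _ _ F) * M = 1 := by
        rw [← hu]; exact u.inv_val
      rw [h5, Matrix.one_mulVec]
    rw [hmul, Matrix.mulVec_zero] at h4
    exact h4.symm
  have hD0 : D = 0 := by
    by_contra h
    obtain ⟨α, hα⟩ := (MvPolynomial.support_nonempty.mpr h)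
    obtain ⟨idx, hidx⟩ := hsupp α hα
    have h6 : c idx = 0 := congrFun hc0 idx
    simp only [hc] at h6
    rw [hidx] at h6
    exact MvPolynomial.mem_support_iff.mp hα h6
  exact sub_eq_zero.mp (hD ▸ hD0)
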